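/- A simple ring R such that R_R is pseudo-injective is right self-injective. -/

import Mathlib

universe u v w

section Defs

variable {R : Type u} [Ring R]

/-- `N` is an essential submodule of `M`. -/
def EssentialSub {M : Type v} [AddCommGroup M] [Module R M] (N : Submodule R M) : Prop :=
  ∀ K : Submodule R M, K ⊓ N = ⊥ → K = ⊥

/-- `N` is essential in `P` (both submodules of `M`, `N ≤ P`). -/
def EssentialIn {M : Type v} [AddCommGroup M] [Module R M] (N P : Submodule R M) : Prop :=
  N ≤ P ∧ ∀ K : Submodule R M, K ≤ P → K ⊓ N = ⊥ → K = ⊥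

/-- `N` is a closed submodule of `M`: it has no proper essential extension in `M`. -/
def ClosedSub {M : Type v} [AddCommGroup M] [Module R M] (N : Submodule R M) : Prop :=
  ∀ P : Submodule R M, EssentialIn N P → N = P

/-- `i : M →ₗ[R] E` realizes `E` as an injective hull of `M`. -/
structure IsInjectiveHull {M : Type v} {E : Type w} [AddCommGroup M] [Module R M]
    [AddCommGroup E] [Module R E] (i : M →ₗ[R] E) : Prop where
  inj : Function.Injective i
  injE : Module.Injective R E
  ess : EssentialSub (LinearMap.range i)

/-- `M` is invariant under every automorphism of the hull `E` given by `i`. -/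
def HullAutInv {M : Type v} {E : Type w} [AddCommGroup M] [Module R M]
    [AddCommGroup E] [Module R E] (i : M →ₗ[R] E) : Prop :=
  ∀ g : E ≃ₗ[R] E, ∀ m : M, g (i m) ∈ LinearMap.range i

end Defs

/-- `M` is automorphism-invariant: invariant under all automorphisms of its injective hull. -/
def AutInvariant (R : Type u) [Ring R] (M : Type v) [AddCommGroup M] [Module R M] : Prop :=
  ∀ (E : Type v) [AddCommGroup E] [Module R E] (i : M →ₗ[R] E),
    IsInjectiveHull i → HullAutInv i

/-- Every monomorphism from a submodule of `M` into `M` extends to an endomorphism of `M`. -/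
def PseudoInjective (R : Type u) [Ring R] (M : Type v) [AddCommGroup M] [Module R M] : Prop :=
  ∀ (A : Submodule R M) (f : A →ₗ[R] M), Function.Injective f →
    ∃ g : M →ₗ[R] M, ∀ a : A, g a = f a

/-- Every homomorphism from a submodule of `M` into `M` extends to an endomorphism of `M`. -/
def QuasiInjective (R : Type u) [Ring R] (M : Type v) [AddCommGroup M] [Module R M] : Prop :=
  ∀ (A : Submodule R M) (f : A →ₗ[R] M), ∃ g : M →ₗ[R] M, ∀ a : A, g a = f a

/-- `X` is `Y`-injective. -/
def RelInjective (R : Type u) [Ring R] (X : Type v) (Y : Type w) [AddCommGroup X] [Module R X]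
    [AddCommGroup Y] [Module R Y] : Prop :=
  ∀ (A : Submodule R Y) (f : A →ₗ[R] X), ∃ g : Y →ₗ[R] X, ∀ a : A, g a = f a

/-- `M` contains no direct sum of two nonzero isomorphic submodules. -/
def SquareFreeMod (R : Type u) [Ring R] (M : Type v) [AddCommGroup M] [Module R M] : Prop :=
  ∀ (A B : Submodule R M), A ⊓ B = ⊥ → Nonempty (A ≃ₗ[R] B) → A = ⊥

/-- `X` and `Y` have no nonzero isomorphic submodules. -/
def OrthogonalMod (R : Type u) [Ring R] (X : Type v) (Y : Type w) [AddCommGroup X] [Module R X]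
    [AddCommGroup Y] [Module R Y] : Prop :=
  ∀ (A : Submodule R X) (B : Submodule R Y), Nonempty (A ≃ₗ[R] B) → A = ⊥

/-- No nonzero element of `M` is annihilated by an essential (right) ideal of `R`. -/
def NonsingularMod (R : Type u) [Ring R] (M : Type v) [AddCommGroup M] [Module R M] : Prop :=
  ∀ m : M, EssentialSub (LinearMap.ker (LinearMap.toSpanSingleton R M m)) → m = 0

/-!
Since `R` is simple, its right singular ideal vanishes, so `R_R` and its injective hull `E` are
nonsingular. An automorphism of `E` agrees, on an essential submodule, with an extension of its
restriction to `R`, which pseudo-injectivity provides; so `R` is invariant under all automorphisms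
of `E`, i.e. the subring of `S = End(E)` stabilizing `R` contains every unit of `S`. Now `S` is von
Neumann regular (`E` is nonsingular and injective) and simple (`R` is simple and essential in `E`).
In such a ring the units generate everything: without nontrivial idempotents `S` is a division
ring, and otherwise the Peirce components of any element are square-zero or sums of products of
square-zero elements, and `1 + n` is a unit when `n² = 0`. Hence every endomorphism of `E` maps `R`
into `R`, and since every element of `E` is the image of `1` under some endomorphism, `E = R`.
-/

section Essential

open Submodule

variable {R M : Type*} [Ring R] [AddCommGroup M] [Module R M]

theorem Submodule.span_singleton_inf_eq_bot_iff {x : M} {N : Submodule R M} :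
    (R ∙ x) ⊓ N = ⊥ ↔ ∀ a : R, a • x ∈ N → a • x = 0 := by
  refine ⟨fun h a ha => ?_, fun h => eq_bot_iff.2 fun y ⟨hy, hyN⟩ => ?_⟩
  · exact (mem_bot R).1 (h ▸ mem_inf.2 ⟨smul_mem _ a (mem_span_singleton_self x), ha⟩)
  · obtain ⟨a, rfl⟩ := mem_span_singleton.1 hy
    exact (mem_bot R).2 (h a hyN)

theorem essentialIn_iff {N P : Submodule R M} :
    EssentialIn N P ↔ N ≤ P ∧ ∀ x ∈ P, x ≠ 0 → ∃ a : R, a • x ∈ N ∧ a • x ≠ 0 := by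
  refine and_congr_right fun _ => ⟨fun h x hx hx0 => ?_, fun h K hKP hKN => ?_⟩
  · by_contra! hxN
    have := h _ ((span_singleton_le_iff_mem x P).2 hx) (span_singleton_inf_eq_bot_iff.2 hxN)
    exact hx0 ((span_singleton_eq_bot).1 this)
  · refine eq_bot_iff.2 fun x hxK => (mem_bot R).2 (by_contra fun hx0 => ?_)
    obtain ⟨a, haN, ha0⟩ := h x (hKP hxK) hx0
    exact ha0 ((mem_bot R).1 (hKN ▸ mem_inf.2 ⟨K.smul_mem a hxK, haN⟩))

theorem essentialSub_iff {N : Submodule R M} :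
    EssentialSub N ↔ ∀ x : M, x ≠ 0 → ∃ a : R, a • x ∈ N ∧ a • x ≠ 0 := by
  have : EssentialSub N ↔ EssentialIn N ⊤ := by simp [EssentialSub, EssentialIn]
  simp [this, essentialIn_iff]

theorem essentialSub_top : EssentialSub (⊤ : Submodule R M) :=
  fun K hK => by rwa [inf_top_eq] at hK

theorem EssentialSub.mono {N N' : Submodule R M} (hN : EssentialSub N) (h : N ≤ N') :
    EssentialSub N' :=
  fun K hK => hN K (eq_bot_iff.2 (hK ▸ inf_le_inf_left K h))

theorem EssentialSub.inf {N N' : Submodule R M} (hN : EssentialSub N) (hN' : EssentialSub N') :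
    EssentialSub (N ⊓ N') :=
  fun K hK => hN K (hN' _ (by rwa [inf_assoc]))

theorem EssentialSub.comap {M' : Type*} [AddCommGroup M'] [Module R M'] {N : Submodule R M}
    (hN : EssentialSub N) (f : M' →ₗ[R] M) : EssentialSub (N.comap f) := by
  rw [essentialSub_iff] at hN ⊢
  intro x hx0
  by_cases hfx : f x = 0
  · exact ⟨1, by simp [hfx], by simpa using hx0⟩
  · obtain ⟨a, haN, ha0⟩ := hN (f x) hfx
    exact ⟨a, by simpa using haN, fun h => ha0 (by rw [← map_smul, h, map_zero])⟩

theorem EssentialIn.trans {N₀ N P : Submodule R M} (h₀ : EssentialIn N₀ N)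
    (h : EssentialIn N P) : EssentialIn N₀ P := by
  refine ⟨h₀.1.trans h.1, fun K hKP hK => h.2 K hKP (h₀.2 _ inf_le_right ?_)⟩
  rw [inf_assoc, inf_eq_right.2 h₀.1, hK]

theorem Submodule.exists_maximal_disjoint (K : Submodule R M) : ∃ C, Maximal (Disjoint · K) C :=
  zorn_le₀ _ fun c hc hchain =>
    ⟨sSup c, hchain.directedOn.disjoint_sSup_left.2 hc, fun _ => le_sSup⟩

theorem exists_essentialIn_closedSub (N₀ : Submodule R M) :
    ∃ N, EssentialIn N₀ N ∧ ClosedSub N := by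
  have chain_bound : ∀ c ⊆ {N | EssentialIn N₀ N}, IsChain (· ≤ ·) c → ∀ y ∈ c,
      ∃ ub ∈ {N | EssentialIn N₀ N}, ∀ z ∈ c, z ≤ ub := by
    intro c hc hchain y hy
    refine ⟨sSup c, essentialIn_iff.2 ⟨(hc hy).1.trans (le_sSup hy), fun x hx hx0 => ?_⟩,
      fun _ => le_sSup⟩
    obtain ⟨p, hp, hxp⟩ := (mem_sSup_of_directed ⟨y, hy⟩ hchain.directedOn).1 hx
    exact (essentialIn_iff.1 (hc hp)).2 x hxp hx0
  obtain ⟨N, -, hN⟩ := zorn_le_nonempty₀ _ chain_bound N₀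
    ⟨le_rfl, fun K hK h => by rwa [inf_eq_left.2 hK] at h⟩
  exact ⟨N, hN.prop, fun P hP => le_antisymm hP.1 (hN.le_of_ge (hN.prop.trans hP) hP.1)⟩

end Essential

section InjectiveHull

open Submodule LinearMap

variable {R : Type*} [Ring R]

theorem Module.Injective.of_comp_eq_id {M N : Type v} [AddCommGroup M] [Module R M]
    [AddCommGroup N] [Module R N] [Module.Injective R M] (s : N →ₗ[R] M) (r : M →ₗ[R] N)
    (hrs : r ∘ₗ s = LinearMap.id) : Module.Injective R N :=
  ⟨fun _ _ _ _ _ _ f hf g =>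
    let ⟨h, hh⟩ := Module.Injective.out f hf (s ∘ₗ g)
    ⟨r ∘ₗ h, fun x => by simpa [hh] using LinearMap.congr_fun hrs (g x)⟩⟩

variable {M : Type*} [AddCommGroup M] [Module R M]

theorem essentialSub_map_mkQ_of_maximal_disjoint {K C : Submodule R M}
    (hC : Maximal (Disjoint · K) C) : EssentialSub (K.map C.mkQ) := by
  intro S hS
  have hCS : C ≤ S.comap C.mkQ := fun x hx => by simp [(Quotient.mk_eq_zero C).2 hx]
  have hdisj : Disjoint (S.comap C.mkQ) K := by
    refine disjoint_def.2 fun x hxS hxK => ?_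
    have : C.mkQ x ∈ S ⊓ K.map C.mkQ := ⟨hxS, mem_map_of_mem hxK⟩
    rw [hS, mem_bot, mkQ_apply, Quotient.mk_eq_zero] at this
    exact disjoint_def.1 hC.prop x this hxK
  rw [← map_comap_eq_of_surjective C.mkQ_surjective S, ← le_bot_iff]
  calc _ ≤ C.map C.mkQ := map_mono (hC.le_of_ge hdisj hCS)
    _ = ⊥ := C.mkQ_map_self

theorem essentialSub_sup_of_maximal_disjoint {K C : Submodule R M}
    (hC : Maximal (Disjoint · K) C) : EssentialSub (K ⊔ C) := by
  simpa [comap_map_mkQ, sup_comm] using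
    (essentialSub_map_mkQ_of_maximal_disjoint hC).comap C.mkQ

theorem EssentialSub.essentialIn_map {M' : Type*} [AddCommGroup M'] [Module R M']
    {N : Submodule R M} (hN : EssentialSub N) {f : M →ₗ[R] M'} (hf : Function.Injective f) :
    EssentialIn (N.map f) (range f) := by
  refine ⟨map_le_range, fun K hK hKN => ?_⟩
  have hK' : K.comap f = ⊥ := hN _ <| by
    rw [← comap_map_eq_of_injective hf N, ← comap_inf, hKN, comap_bot, ker_eq_bot.2 hf]
  rw [← map_comap_eq_self hK, hK', Submodule.map_bot]

/-- The retraction is built on `M ⧸ C` for a complement `C` of `N`, where `N` becomes essential;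
closedness of `N` forces the lifted inverse to land in `N`. -/
theorem ClosedSub.exists_retraction [Module.Injective R M] {N : Submodule R M}
    (hN : ClosedSub N) : ∃ r : M →ₗ[R] N, r ∘ₗ N.subtype = LinearMap.id := by
  obtain ⟨C, hC⟩ := N.exists_maximal_disjoint
  set f := C.mkQ ∘ₗ N.subtype
  have hf : Function.Injective f := by
    rw [← ker_eq_bot, ker_comp, ker_mkQ, ← disjoint_iff_comap_eq_bot]
    exact hC.prop.symm
  have hess : EssentialSub (range f) := by
    rw [range_comp, range_subtype]
    exact essentialSub_map_mkQ_of_maximal_disjoint hC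
  obtain ⟨β, hβ⟩ := Module.Injective.out f hf N.subtype
  have hβf : β ∘ₗ f = N.subtype := LinearMap.ext hβ
  have hβ_inj : Function.Injective β := ker_eq_bot.1 <| hess _ <| eq_bot_iff.2 <| by
    rintro _ ⟨hy, n, rfl⟩
    replace hy : (n : M) = 0 := (hβ n).symm.trans hy
    simp [(by simpa using hy : n = 0)]
  have hNβ : N = range β := hN _ <| by
    simpa [← range_comp, hβf] using hess.essentialIn_map hβ_inj
  refine ⟨(β ∘ₗ C.mkQ).codRestrict N fun x => hNβ ▸ mem_range_self β _, ?_⟩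
  ext n
  exact hβ n

theorem ClosedSub.injective [Module.Injective R M] {N : Submodule R M} (hN : ClosedSub N) :
    Module.Injective R N :=
  let ⟨r, hr⟩ := hN.exists_retraction
  Module.Injective.of_comp_eq_id N.subtype r hr

theorem EssentialIn.essentialSub_comap_subtype {N₀ N : Submodule R M} (h : EssentialIn N₀ N) :
    EssentialSub (N₀.comap N.subtype) := by
  refine essentialSub_iff.2 fun x hx0 => ?_
  obtain ⟨a, ha, ha0⟩ := (essentialIn_iff.1 h).2 x x.2 (by simpa using hx0)
  exact ⟨a, ha, fun h0 => ha0 (by simpa using congrArg Subtype.val h0)⟩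

end InjectiveHull

open CategoryTheory in
theorem exists_isInjectiveHull (R : Type u) [Ring R] [Small.{v} R] (M : Type v)
    [AddCommGroup M] [Module R M] :
    ∃ (E : Type v) (_ : AddCommGroup E) (_ : Module R E) (i : M →ₗ[R] E), IsInjectiveHull i := by
  let I : ModuleCat.{v} R := Injective.under (ModuleCat.of R M)
  let ι : ModuleCat.of R M ⟶ I := Injective.ι _
  have : Injective (ModuleCat.of R I) := Injective.injective_under _
  have := Module.injective_module_of_injective_object R I
  have hι : Function.Injective ι.hom := (ModuleCat.mono_iff_injective ι).1 inferInstance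
  obtain ⟨N, hN, hNc⟩ := exists_essentialIn_closedSub (LinearMap.range ι.hom)
  refine ⟨N, _, _, ι.hom.codRestrict N fun m => hN.1 ⟨m, rfl⟩,
    ⟨fun a b h => hι (congrArg Subtype.val h), hNc.injective, ?_⟩⟩
  exact hN.essentialSub_comap_subtype.mono fun x ⟨m, hm⟩ => ⟨m, Subtype.ext hm⟩

section Nonsingular

open LinearMap

variable {R M : Type*} [Ring R] [AddCommGroup M] [Module R M]

theorem NonsingularMod.eq_zero_of_essentialSub_ker (hM : NonsingularMod R M) {M' : Type*}
    [AddCommGroup M'] [Module R M'] (f : M' →ₗ[R] M) (hf : EssentialSub (ker f)) : f = 0 := by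
  ext y
  exact hM (f y) ((hf.comap (toSpanSingleton R M' y)).mono fun a ha => by simpa using ha)

theorem NonsingularMod.of_essentialSub_range (hM : NonsingularMod R M) {E : Type*}
    [AddCommGroup E] [Module R E] (i : M →ₗ[R] E) (hi : Function.Injective i)
    (hess : EssentialSub (range i)) : NonsingularMod R E := by
  intro x hx
  by_contra hx0
  obtain ⟨a, ⟨m, hm⟩, ha0⟩ := essentialSub_iff.1 hess x hx0
  have hm0 : m = 0 := hM m <| (hx.comap (toSpanSingleton R R a)).mono fun b hb =>
    hi (by simpa [hm, mul_smul] using hb)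
  exact ha0 (by rw [← hm, hm0, map_zero])

end Nonsingular

open MulOpposite LinearMap in
/-- The right singular ideal `Z(R_R)`. -/
def rightSingularIdeal (R : Type*) [Ring R] : TwoSidedIdeal R :=
  .mk' {r | EssentialSub (ker (toSpanSingleton Rᵐᵒᵖ R r))}
    (essentialSub_top.mono fun s _ => by simp)
    (fun hx hy => (hx.inf hy).mono fun s ⟨h₁, h₂⟩ => by simp_all [smul_add])
    (fun hx => hx.mono fun s h => by simp_all)
    (fun {x y} hy => hy.mono fun s h => by simp_all [smul_eq_mul_unop, mul_assoc])
    (fun {x y} hx => (hx.comap (toSpanSingleton Rᵐᵒᵖ Rᵐᵒᵖ (op y))).mono fun s h => by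
      simp_all [smul_eq_mul_unop, mul_assoc])

open MulOpposite LinearMap in
theorem nonsingularMod_of_isSimpleRing (R : Type*) [Ring R] [IsSimpleRing R] :
    NonsingularMod Rᵐᵒᵖ R := by
  intro r hr
  have hr' : r ∈ rightSingularIdeal R := (TwoSidedIdeal.mem_mk' ..).2 hr
  rcases eq_bot_or_eq_top (rightSingularIdeal R) with h | h
  · rwa [h, TwoSidedIdeal.mem_bot] at hr'
  · have h₁ : (1 : R) ∈ rightSingularIdeal R := h ▸ trivial
    have hann : ker (toSpanSingleton Rᵐᵒᵖ R 1) = ⊥ :=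
      ker_eq_bot.2 fun s t hst => unop_injective (by simpa [smul_eq_mul_unop] using hst)
    have := (TwoSidedIdeal.mem_mk' ..).1 h₁ ⊤ (by simp [hann])
    exact absurd this top_ne_bot

open LinearMap in
/-- An automorphism `σ` of the hull agrees on the essential submodule `M ∩ σ⁻¹ M` with an extension
of the monomorphism `σ|`; nonsingularity of the hull makes the two equal. -/
theorem PseudoInjective.autInvariant {R : Type u} [Ring R] {M : Type v} [AddCommGroup M]
    [Module R M] (hM : NonsingularMod R M) (hp : PseudoInjective R M) : AutInvariant R M := by
  intro E _ _ i hi σ m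
  have := hi.injE
  let A := (range i).comap (σ.toLinearMap ∘ₗ i)
  let τ : A →ₗ[R] M := (LinearEquiv.ofInjective i hi.inj).symm.toLinearMap ∘ₗ
    (σ.toLinearMap ∘ₗ i ∘ₗ A.subtype).codRestrict (range i) fun a => a.2
  have hτ : ∀ a : A, i (τ a) = σ (i a) := fun a =>
    LinearEquiv.ofInjective_symm_apply i (h := hi.inj) _
  obtain ⟨g, hg⟩ := hp A τ fun a b hab => Subtype.ext <| hi.inj <| σ.injective <| by
    rw [← hτ, ← hτ, hab]
  obtain ⟨G, hG⟩ := Module.Injective.out i hi.inj (i ∘ₗ g)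
  have hGσ : G = σ.toLinearMap := by
    refine sub_eq_zero.1 <| (hM.of_essentialSub_range i hi.inj hi.ess).eq_zero_of_essentialSub_ker
      _ <| (hi.ess.inf (hi.ess.comap σ.toLinearMap)).mono ?_
    rintro _ ⟨⟨r, rfl⟩, hr⟩
    rw [mem_ker, LinearMap.sub_apply, hG r, comp_apply, hg ⟨r, hr⟩, hτ]; exact sub_self _
  exact ⟨g m, by rw [← comp_apply, ← hG, hGσ]; rfl⟩

section UnitsGenerate

variable {S : Type*} [Ring S]

theorem isUnit_of_mul_mul_self_eq {a b : S} (hab : a * b * a = a) (ha : a ≠ 0)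
    (hidem : ∀ e : S, IsIdempotentElem e → e = 0 ∨ e = 1) : IsUnit a := by
  have hab1 : a * b = 1 := (hidem _ (by rw [IsIdempotentElem, ← mul_assoc, hab])).resolve_left
    fun h => ha (by rw [← hab, h, zero_mul])
  have hba1 : b * a = 1 :=
    (hidem _ (by rw [IsIdempotentElem, mul_assoc, ← mul_assoc a, hab])).resolve_left
    fun h => ha (by rw [← hab, mul_assoc, h, mul_zero])
  exact ⟨⟨a, b, hab1, hba1⟩, rfl⟩

variable {T : Subring S}

theorem Subring.mem_of_mul_self_eq_zero (hT : ∀ u : Sˣ, (u : S) ∈ T) {n : S} (hn : n * n = 0) :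
    n ∈ T := by
  have h := hT (IsNilpotent.isUnit_one_add ⟨2, by rw [sq, hn]⟩).unit
  simpa using sub_mem h T.one_mem

/-- Writing `1 = ∑ aₖ v bₖ` in the simple ring, `u q u = ∑ (u q aₖ v) (v bₖ u)` is a sum of
products of square-zero elements. -/
theorem Subring.mul_mul_mem_of_units_mem [IsSimpleRing S] (hT : ∀ u : Sˣ, (u : S) ∈ T)
    {u v : S} (huv : u * v = 0) (hvu : v * u = 0) (hv : IsIdempotentElem v) (hv0 : v ≠ 0)
    (q : S) : u * q * u ∈ T := by
  let J : TwoSidedIdeal S := .mk' {m | ∀ a b, u * a * m * b * u ∈ T}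
    (fun a b => by simp [T.zero_mem])
    (fun hx hy a b => by simpa [mul_add, add_mul] using add_mem (hx a b) (hy a b))
    (fun hx a b => by simpa using neg_mem (hx a b))
    (fun {x _} hy a b => by simpa [mul_assoc] using hy (a * x) b)
    (fun {_ y} hx a b => by simpa [mul_assoc] using hx a (y * b))
  have hvJ : v ∈ J := (TwoSidedIdeal.mem_mk' ..).2 fun a b => by
    have h₁ : (u * a * v) * (u * a * v) = 0 := by simp [mul_assoc, ← mul_assoc v u, hvu]
    have h₂ : (v * b * u) * (v * b * u) = 0 := by simp [mul_assoc, ← mul_assoc u v, huv]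
    have := mul_mem (mem_of_mul_self_eq_zero hT h₁) (mem_of_mul_self_eq_zero hT h₂)
    rwa [show u * a * v * (v * b * u) = u * a * (v * v) * b * u by noncomm_ring, hv.eq] at this
  rcases eq_bot_or_eq_top J with hJ | hJ
  · exact absurd ((TwoSidedIdeal.mem_bot _).1 (hJ ▸ hvJ)) hv0
  · simpa using (TwoSidedIdeal.mem_mk' ..).1 (hJ ▸ trivial : (1 : S) ∈ J) q 1

theorem Subring.eq_top_of_units_mem [IsSimpleRing S] (hreg : ∀ a : S, ∃ b, a * b * a = a)
    (hT : ∀ u : Sˣ, (u : S) ∈ T) : T = ⊤ := by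
  refine eq_top_iff.2 fun q _ => ?_
  by_cases hidem : ∀ e : S, IsIdempotentElem e → e = 0 ∨ e = 1
  · rcases eq_or_ne q 0 with rfl | hq
    · exact T.zero_mem
    obtain ⟨b, hb⟩ := hreg q
    exact hT (isUnit_of_mul_mul_self_eq hb hq hidem).unit
  push Not at hidem
  obtain ⟨e, he, he0, he1⟩ := hidem
  have he1' : 1 - e ≠ 0 := sub_ne_zero.2 he1.symm
  have peirce : q = e * q * e + e * q * (1 - e) + (1 - e) * q * e + (1 - e) * q * (1 - e) := by
    noncomm_ring
  rw [peirce]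
  refine add_mem (add_mem (add_mem ?_ ?_) ?_) ?_
  · exact mul_mul_mem_of_units_mem hT he.mul_one_sub_self he.one_sub_mul_self he.one_sub he1' q
  · refine mem_of_mul_self_eq_zero hT ?_
    simp [mul_assoc, ← mul_assoc (1 - e) e, he.one_sub_mul_self]
  · refine mem_of_mul_self_eq_zero hT ?_
    simp [mul_assoc, ← mul_assoc e (1 - e), he.mul_one_sub_self]
  · exact mul_mul_mem_of_units_mem hT he.one_sub_mul_self he.mul_one_sub_self he he0 q

end UnitsGenerate

section Endomorphisms

open LinearMap

variable {R M : Type*} [Ring R] [AddCommGroup M] [Module R M]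

def Submodule.endStabilizer (N : Submodule R M) : Subring (Module.End R M) where
  carrier := {φ | ∀ x ∈ N, φ x ∈ N}
  one_mem' _ hx := hx
  mul_mem' hφ hψ x hx := hφ _ (hψ x hx)
  zero_mem' _ _ := N.zero_mem
  add_mem' hφ hψ x hx := N.add_mem (hφ x hx) (hψ x hx)
  neg_mem' hφ x hx := N.neg_mem (hφ x hx)

theorem HullAutInv.units_mem_endStabilizer {E : Type*} [AddCommGroup E] [Module R E]
    {i : M →ₗ[R] E} (h : HullAutInv i) (u : (Module.End R E)ˣ) :
    (u : Module.End R E) ∈ (range i).endStabilizer := by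
  rintro _ ⟨m, rfl⟩
  simpa using h (GeneralLinearGroup.generalLinearEquiv R E u) m

/-- `ψ` inverts `φ` on a complement `C` of `ker φ`; then `φ ψ φ = φ` on the essential
submodule `ker φ ⊔ C`. -/
theorem Module.End.exists_mul_mul_eq_self [Module.Injective R M] (hM : NonsingularMod R M)
    (φ : Module.End R M) : ∃ ψ, φ * ψ * φ = φ := by
  obtain ⟨C, hC⟩ := (ker φ).exists_maximal_disjoint
  set f := φ ∘ₗ C.subtype
  have hf : Function.Injective f := by
    rw [← ker_eq_bot, ker_comp, ← Submodule.disjoint_iff_comap_eq_bot]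
    exact hC.prop
  obtain ⟨ψ, hψf⟩ := Module.Injective.out f hf C.subtype
  refine ⟨ψ, sub_eq_zero.1 <| hM.eq_zero_of_essentialSub_ker _ <|
    (essentialSub_sup_of_maximal_disjoint hC).mono <| sup_le (fun x hx => ?_) fun x hx => ?_⟩
  · simp [mem_ker.1 hx]
  · simpa [sub_eq_zero, f] using congrArg φ (hψf ⟨x, hx⟩)

end Endomorphisms

section HullOfRing

open MulOpposite LinearMap

variable {R : Type u} [Ring R] {E : Type u} [AddCommGroup E] [Module Rᵐᵒᵖ E]

theorem LinearMap.apply_eq_op_smul_apply_one (f : R →ₗ[Rᵐᵒᵖ] E) (r : R) :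
    f r = op r • f 1 := by
  rw [← map_smul, op_smul_eq_mul, one_mul]

variable (i : R →ₗ[Rᵐᵒᵖ] E)

theorem exists_end_apply_one_eq [Module.Injective Rᵐᵒᵖ E] (hi : Function.Injective i) (x : E) :
    ∃ φ : Module.End Rᵐᵒᵖ E, φ (i 1) = x := by
  obtain ⟨φ, hφ⟩ := Module.Injective.out i hi
    (toSpanSingleton Rᵐᵒᵖ E x ∘ₗ (opLinearEquiv Rᵐᵒᵖ).toLinearMap)
  exact ⟨φ, by simp [hφ]⟩

theorem end_ext_of_apply_one (hE : NonsingularMod Rᵐᵒᵖ E) (hess : EssentialSub (range i))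
    {φ ψ : Module.End Rᵐᵒᵖ E} (h : φ (i 1) = ψ (i 1)) : φ = ψ := by
  refine sub_eq_zero.1 (hE.eq_zero_of_essentialSub_ker _ (hess.mono ?_))
  rintro _ ⟨r, rfl⟩
  rw [mem_ker, LinearMap.sub_apply, ← comp_apply, ← comp_apply ψ, apply_eq_op_smul_apply_one,
    apply_eq_op_smul_apply_one (ψ ∘ₗ i)]
  simp [h]

theorem exists_mem_apply_one_eq_of_ne_bot [Module.Injective Rᵐᵒᵖ E] (hi : Function.Injective i)
    (hess : EssentialSub (range i)) (hE : NonsingularMod Rᵐᵒᵖ E)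
    {J : TwoSidedIdeal (Module.End Rᵐᵒᵖ E)} (hJ : J ≠ ⊥) : ∃ φ ∈ J, ∃ r ≠ 0, φ (i 1) = i r := by
  obtain ⟨e, heJ, he0⟩ : ∃ e ∈ J, e ≠ 0 := by
    by_contra! h
    exact hJ (eq_bot_iff.2 fun e he => (TwoSidedIdeal.mem_bot _).2 (h e he))
  have hei : e (i 1) ≠ 0 := fun h =>
    he0 (end_ext_of_apply_one i hE hess (h.trans (LinearMap.zero_apply _).symm))
  obtain ⟨a, ⟨r, hr⟩, ha0⟩ := essentialSub_iff.1 hess _ hei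
  obtain ⟨ρ, hρ⟩ := exists_end_apply_one_eq i hi (a • i 1)
  refine ⟨e * ρ, J.mul_mem_right _ _ heJ, r, fun hr0 => ha0 ?_, by simp [hρ, hr]⟩
  rw [← hr, hr0, map_zero]

theorem isSimpleRing_end [IsSimpleRing R] [Module.Injective Rᵐᵒᵖ E] (hi : Function.Injective i)
    (hess : EssentialSub (range i)) (hE : NonsingularMod Rᵐᵒᵖ E) :
    IsSimpleRing (Module.End Rᵐᵒᵖ E) := by
  have : Nontrivial E := ⟨⟨i 1, 0, fun h => one_ne_zero (hi (h.trans (map_zero i).symm))⟩⟩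
  refine .of_eq_bot_or_eq_top fun J => or_iff_not_imp_left.2 fun hJ => ?_
  choose ρ hρ using exists_end_apply_one_eq i hi
  let I : TwoSidedIdeal R := .mk' {r | ∃ φ ∈ J, φ (i 1) = i r}
    ⟨0, J.zero_mem, by simp⟩
    (fun ⟨φ, hφ, h⟩ ⟨ψ, hψ, h'⟩ => ⟨φ + ψ, J.add_mem hφ hψ, by simp [h, h']⟩)
    (fun ⟨φ, hφ, h⟩ => ⟨-φ, J.neg_mem hφ, by simp [h]⟩)
    (fun {x r} ⟨φ, hφ, h⟩ => ⟨ρ (i x) * φ, J.mul_mem_left _ _ hφ, by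
      rw [Module.End.mul_apply, h, ← comp_apply, apply_eq_op_smul_apply_one, comp_apply, hρ,
        ← map_smul, op_smul_eq_mul]⟩)
    (fun {r y} ⟨φ, hφ, h⟩ => ⟨φ * ρ (i y), J.mul_mem_right _ _ hφ, by
      rw [Module.End.mul_apply, hρ, ← comp_apply, apply_eq_op_smul_apply_one, comp_apply, h,
        ← map_smul, op_smul_eq_mul]⟩)
  have hI : I ≠ ⊥ := by
    obtain ⟨φ, hφJ, r, hr0, hφ⟩ := exists_mem_apply_one_eq_of_ne_bot i hi hess hE hJ
    exact fun hbot => hr0 <| (TwoSidedIdeal.mem_bot _).1 <|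
      hbot ▸ (TwoSidedIdeal.mem_mk' ..).2 ⟨φ, hφJ, hφ⟩
  obtain ⟨φ, hφJ, hφ⟩ := (TwoSidedIdeal.mem_mk' ..).1
    ((eq_bot_or_eq_top I).resolve_left hI ▸ trivial : (1 : R) ∈ I)
  rw [end_ext_of_apply_one i hE hess (hφ.trans rfl : φ (i 1) = (1 : Module.End _ E) (i 1))]
    at hφJ
  exact eq_top_iff.2 fun ψ _ => by simpa using J.mul_mem_left ψ 1 hφJ

theorem HullAutInv.range_eq_top [IsSimpleRing R] (h : HullAutInv i) (hi : IsInjectiveHull i)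
    (hE : NonsingularMod Rᵐᵒᵖ E) : range i = ⊤ := by
  have := hi.injE
  have := isSimpleRing_end i hi.inj hi.ess hE
  have hT := Subring.eq_top_of_units_mem (Module.End.exists_mul_mul_eq_self hE)
    h.units_mem_endStabilizer
  refine eq_top_iff.2 fun x _ => ?_
  obtain ⟨φ, rfl⟩ := exists_end_apply_one_eq i hi.inj x
  exact (hT ▸ Subring.mem_top φ : φ ∈ (range i).endStabilizer) _ (mem_range_self i 1)

end HullOfRing

/-- a simple right pseudo-injective ring is right self-injective. -/
theorem simple_pseudoInjective_selfInjective {R : Type u} [Ring R]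
    (hsimple : IsSimpleRing R)
    (hp : PseudoInjective Rᵐᵒᵖ R) :
    Module.Injective Rᵐᵒᵖ R := by
  have hR := nonsingularMod_of_isSimpleRing R
  obtain ⟨E, _, _, i, hi⟩ := exists_isInjectiveHull Rᵐᵒᵖ R
  have hE := hR.of_essentialSub_range i hi.inj hi.ess
  have hsurj := (hp.autInvariant hR E i hi).range_eq_top i hi hE
  have := hi.injE
  let e := LinearEquiv.ofBijective i ⟨hi.inj, LinearMap.range_eq_top.1 hsurj⟩
  exact Module.Injective.of_comp_eq_id e.toLinearMap e.symm.toLinearMap (by ext; simp)
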